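/- arXiv:2604.20106 — 8 statements merged into one kernel-verified Lean document; each statement's English description precedes it below -/
import Mathlib

section
/- Let S be an HL semigroup. For every finite coloring of S and every ε > 0, there exist a, b ∈ S with 0 < a < ε, 0 < b < ε, a·b ∈ S and b·(a+1) ∈ S, such that the four elements a, b, a·b and b·(a+1) all receive the same color. (Goswami's theorem near zero; Theorem 3.6.) -/
/-!
Pick `y₀ > y₁ > ⋯` in `S`, each far smaller than its predecessor, and put `σ F = ∑_{i ∈ F} y i`.
For blocks `F₁ < F₂ < F₃` the numbers `a = σ F₃ / σ F₂` and `b = σ F₂ / σ F₁` lie in `S` and are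
small, while `a * b = σ F₃ / σ F₁` and `b * (a + 1) = σ (F₂ ∪ F₃) / σ F₁` are again such block
ratios. Colour a pair of blocks `(F, G)` by the colour of `σ G / σ F`; an idempotent ultrafilter
on blocks under union yields `F₁ < F₂ < F₃` on which the four pairs involved share a colour.
-/

/-- A set `S ⊆ ℝ` is an HL semigroup: `S ⊆ (0,∞)`, `S` is dense in `(0,∞)`,
`S` is closed under addition, `S ∩ (0,1)` is closed under multiplication, and
for every `y ∈ S ∩ (0,1)` and every `x ∈ S`, both `x/y ∈ S` and `y·x ∈ S`. -/
def IsHL (S : Set ℝ) : Prop :=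
  (∀ x ∈ S, (0:ℝ) < x) ∧
  (Set.Ioi (0:ℝ) ⊆ closure S) ∧
  (∀ x ∈ S, ∀ y ∈ S, x + y ∈ S) ∧
  (∀ x ∈ S, ∀ y ∈ S, x < 1 → y < 1 → x * y ∈ S) ∧
  (∀ y ∈ S, y < 1 → ∀ x ∈ S, x / y ∈ S ∧ y * x ∈ S)

open Filter Finset

def BlockLT (F G : Finset ℕ) : Prop := ∀ i ∈ F, ∀ j ∈ G, i < j

theorem BlockLT.disjoint {F G : Finset ℕ} (h : BlockLT F G) : Disjoint F G :=
  disjoint_left.mpr fun {_} hi hj => lt_irrefl _ (h _ hi _ hj)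

section BlockUltrafilter

attribute [local instance] Ultrafilter.mul

local instance : Semigroup (Finset ℕ) where
  mul := (· ∪ ·)
  mul_assoc := union_assoc

attribute [local instance] Ultrafilter.semigroup

theorem exists_idempotent_ultrafilter_blockLT :
    ∃ U : Ultrafilter (Finset ℕ), U * U = U ∧
      ∀ F, ∀ᶠ G in (U : Filter (Finset ℕ)), G.Nonempty ∧ BlockLT F G := by
  let C : Finset ℕ → Set (Ultrafilter (Finset ℕ)) :=
    fun F => {U | ∀ᶠ G in (U : Filter (Finset ℕ)), G.Nonempty ∧ BlockLT F G}
  have hC_closed : ∀ F, IsClosed (C F) := fun F => ultrafilter_isClosed_basic _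
  have hC_directed : Directed (· ⊇ ·) C := fun F F' =>
    ⟨F ∪ F', fun U hU => hU.mono fun G hG => ⟨hG.1, fun i hi => hG.2 i (mem_union_left _ hi)⟩,
      fun U hU => hU.mono fun G hG => ⟨hG.1, fun i hi => hG.2 i (mem_union_right _ hi)⟩⟩
  have hC_nonempty : ∀ F, (C F).Nonempty := fun F =>
    ⟨pure {F.sup id + 1}, Ultrafilter.mem_pure.mpr ⟨singleton_nonempty _, fun i hi j hj => by
      rw [mem_singleton.mp hj]; exact Nat.lt_succ_of_le (le_sup (f := id) hi)⟩⟩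
  have hC_mul : ∀ U ∈ ⋂ F, C F, ∀ V ∈ ⋂ F, C F, U * V ∈ ⋂ F, C F := by
    intro U hU V hV
    rw [Set.mem_iInter] at hU hV ⊢
    intro F
    refine (Ultrafilter.eventually_mul U V _).mpr ?_
    filter_upwards [hU F] with G hG
    filter_upwards [hV F] with G' hG'
    exact ⟨hG.1.mono subset_union_left, fun i hi j hj =>
      (mem_union.mp hj).elim (hG.2 i hi j) (hG'.2 i hi j)⟩
  obtain ⟨U, hU, hUU⟩ := exists_idempotent_in_compact_subsemigroup
    Ultrafilter.continuous_mul_left (⋂ F, C F)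
    (IsCompact.nonempty_iInter_of_directed_nonempty_isCompact_isClosed C hC_directed hC_nonempty
      (fun F => (hC_closed F).isCompact) hC_closed)
    (isClosed_iInter hC_closed).isCompact hC_mul
  exact ⟨U, hUU, Set.mem_iInter.mp hU⟩

theorem exists_blockLT_triple_monochromatic {κ : Type*} [Finite κ]
    (χ : Finset ℕ → Finset ℕ → κ) :
    ∃ F₁ F₂ F₃ : Finset ℕ, F₁.Nonempty ∧ F₂.Nonempty ∧ F₃.Nonempty ∧
      BlockLT F₁ F₂ ∧ BlockLT F₂ F₃ ∧
      χ F₁ F₂ = χ F₂ F₃ ∧ χ F₁ F₂ = χ F₁ F₃ ∧ χ F₁ F₂ = χ F₁ (F₂ ∪ F₃) := by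
  obtain ⟨U, hUU, hU⟩ := exists_idempotent_ultrafilter_blockLT
  choose col hcol using fun F =>
    (U.eventually_exists_iff (P := fun k G => χ F G = k)).mp (.of_forall fun G => ⟨_, rfl⟩)
  obtain ⟨j, hj⟩ :=
    (U.eventually_exists_iff (P := fun k F => col F = k)).mp (.of_forall fun F => ⟨_, rfl⟩)
  obtain ⟨F₁, hF₁j, hF₁, -⟩ := (hj.and (hU ∅)).exists
  have hunion : ∀ᶠ F in (U : Filter (Finset ℕ)), ∀ᶠ G in (U : Filter (Finset ℕ)),
      χ F₁ (F ∪ G) = col F₁ :=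
    (Ultrafilter.eventually_mul U U _).mp (hUU.symm ▸ hcol F₁)
  obtain ⟨F₂, hF₂j, h₁₂, h₂, ⟨hF₂, hF₁₂⟩⟩ :=
    (hj.and ((hcol F₁).and (hunion.and (hU F₁)))).exists
  obtain ⟨F₃, h₂₃, h₁₃, h₁₂₃, hF₃, hF₂₃⟩ :=
    ((hcol F₂).and ((hcol F₁).and (h₂.and (hU F₂)))).exists
  refine ⟨F₁, F₂, F₃, hF₁, hF₂, hF₃, hF₁₂, hF₂₃, ?_, ?_, ?_⟩
  · rw [h₁₂, h₂₃, hF₁j, hF₂j]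
  · rw [h₁₂, h₁₃]
  · rw [h₁₂, h₁₂₃]

end BlockUltrafilter

theorem sum_le_two_mul_of_two_mul_succ_le {y : ℕ → ℝ} (hy₀ : ∀ n, 0 ≤ y n)
    (hy : ∀ n, 2 * y (n + 1) ≤ y n) {F : Finset ℕ} {m : ℕ} (hF : ∀ i ∈ F, m ≤ i) :
    ∑ i ∈ F, y i ≤ 2 * y m := by
  have telescope : ∀ k, ∑ i ∈ Ico m (m + k), y i + 2 * y (m + k) ≤ 2 * y m := by
    intro k
    induction k with
    | zero => simp
    | succ k ih =>
      rw [← add_assoc, sum_Ico_succ_top (by omega)]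
      linarith [hy (m + k)]
  have hsub : F ⊆ Ico m (m + (F.sup id + 1)) := fun i hi =>
    mem_Ico.mpr ⟨hF i hi, by have := le_sup (f := id) hi; simp only [id] at this; omega⟩
  calc ∑ i ∈ F, y i ≤ ∑ i ∈ Ico m (m + (F.sup id + 1)), y i :=
        sum_le_sum_of_subset_of_nonneg hsub fun i _ _ => hy₀ i
    _ ≤ 2 * y m := by linarith [telescope (F.sup id + 1), hy₀ (m + (F.sup id + 1))]

theorem exists_seq_mem_lt_mul {S : Set ℝ} (hpos : ∀ x ∈ S, 0 < x)
    (hsmall : ∀ δ > 0, ∃ x ∈ S, x < δ) {q : ℝ} (hq : 0 < q) :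
    ∃ y : ℕ → ℝ, (∀ n, y n ∈ S) ∧ y 0 < q ∧ ∀ n, y (n + 1) < q * y n := by
  choose next hnextS hnext using fun x : S => hsmall (q * x) (mul_pos hq (hpos x x.2))
  obtain ⟨x₀, hx₀S, hx₀⟩ := hsmall q hq
  let step : S → S := fun x => ⟨next x, hnextS x⟩
  refine ⟨fun n => (step^[n] ⟨x₀, hx₀S⟩ : ℝ), fun n => Subtype.prop _, hx₀, fun n => ?_⟩
  simp only [Function.iterate_succ_apply']
  exact hnext _

namespace IsHL

theorem pos {S : Set ℝ} (hS : IsHL S) {x : ℝ} (hx : x ∈ S) : 0 < x := hS.1 x hx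

theorem exists_mem_lt {S : Set ℝ} (hS : IsHL S) {δ : ℝ} (hδ : 0 < δ) : ∃ x ∈ S, x < δ := by
  obtain ⟨x, hx, hxS⟩ := mem_closure_iff.mp (hS.2.1 (half_pos hδ)) (Set.Iio δ) isOpen_Iio
    (half_lt_self hδ)
  exact ⟨x, hxS, hx⟩

theorem sum_mem {S : Set ℝ} (hS : IsHL S) {y : ℕ → ℝ} (hy : ∀ n, y n ∈ S) {F : Finset ℕ}
    (hF : F.Nonempty) : ∑ i ∈ F, y i ∈ S :=
  sum_induction_nonempty y (· ∈ S) (fun a b ha hb => hS.2.2.1 a ha b hb) hF fun i _ => hy i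

theorem div_mem {S : Set ℝ} (hS : IsHL S) {x y : ℝ} (hx : x ∈ S) (hy : y ∈ S) (hy₁ : y < 1) :
    x / y ∈ S :=
  (hS.2.2.2.2 y hy hy₁ x hx).1

theorem exists_blockSum {S : Set ℝ} (hS : IsHL S) {ε : ℝ} (hε : 0 < ε) :
    ∃ σ : Finset ℕ → ℝ, (∀ F, F.Nonempty → σ F ∈ S ∧ σ F < 1) ∧
      (∀ F G, Disjoint F G → σ (F ∪ G) = σ F + σ G) ∧
      ∀ F G, F.Nonempty → BlockLT F G → σ G / σ F < ε := by
  obtain ⟨δ, hδ, hδε, hδ₁⟩ : ∃ δ : ℝ, 0 < δ ∧ 4 * δ ≤ ε ∧ 4 * δ ≤ 1 :=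
    ⟨min ε 1 / 4, by positivity, by linarith [min_le_left ε 1], by linarith [min_le_right ε 1]⟩
  obtain ⟨y, hyS, hy0, hy⟩ := exists_seq_mem_lt_mul hS.1 (fun _ => hS.exists_mem_lt) hδ
  have hypos : ∀ n, 0 < y n := fun n => hS.pos (hyS n)
  have hhalf : ∀ n, 2 * y (n + 1) ≤ y n := fun n => by nlinarith [hy n, hypos n]
  have hbound : ∀ {F : Finset ℕ} {m : ℕ}, (∀ i ∈ F, m ≤ i) → ∑ i ∈ F, y i ≤ 2 * y m :=
    sum_le_two_mul_of_two_mul_succ_le (fun n => (hypos n).le) hhalf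
  refine ⟨fun F => ∑ i ∈ F, y i, fun F hF => ⟨hS.sum_mem hyS hF, ?_⟩,
    fun F G h => sum_union h, fun F G hF hFG => ?_⟩
  · linarith [hbound (F := F) (m := 0) fun i _ => i.zero_le]
  · set m := F.max' hF
    have hFpos : 0 < ∑ i ∈ F, y i := sum_pos (fun i _ => hypos i) hF
    have hym : y m ≤ ∑ i ∈ F, y i :=
      single_le_sum (fun i _ => (hypos i).le) (F.max'_mem hF)
    have hG : ∑ i ∈ G, y i ≤ 2 * y (m + 1) := hbound fun j hj => hFG m (F.max'_mem hF) j hj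
    rw [div_lt_iff₀ hFpos]
    nlinarith [hy m, hypos m]

end IsHL

/-- Goswami's theorem near zero (Theorem 3.6). -/
theorem goswami_near_zero (S : Set ℝ) (hS : IsHL S) (κ : Type*) [Finite κ]
    (c : {x : ℝ // x ∈ S} → κ) (ε : ℝ) (hε : 0 < ε) :
    ∃ (a b : ℝ) (ha : a ∈ S) (hb : b ∈ S) (hab : a * b ∈ S) (hba : b * (a + 1) ∈ S),
      0 < a ∧ a < ε ∧ 0 < b ∧ b < ε ∧
      c ⟨a, ha⟩ = c ⟨b, hb⟩ ∧ c ⟨a, ha⟩ = c ⟨a * b, hab⟩ ∧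
      c ⟨a, ha⟩ = c ⟨b * (a + 1), hba⟩ := by
  classical
  obtain ⟨σ, hσS, hσ_union, hσ_lt⟩ := hS.exists_blockSum hε
  obtain ⟨x₀, hx₀, -⟩ := hS.exists_mem_lt one_pos
  let d : ℝ → κ := fun x => if h : x ∈ S then c ⟨x, h⟩ else c ⟨x₀, hx₀⟩
  have hd : ∀ x (hx : x ∈ S), c ⟨x, hx⟩ = d x := fun x hx => by simp only [d, dif_pos hx]
  obtain ⟨F₁, F₂, F₃, hF₁, hF₂, hF₃, h₁₂, h₂₃, e₂₃, e₁₃, e₁₂₃⟩ :=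
    exists_blockLT_triple_monochromatic fun F G => d (σ G / σ F)
  have hσ₁ := hσS F₁ hF₁
  have hσ₂ := hσS F₂ hF₂
  have hσ₃ := hσS F₃ hF₃
  have hab : σ F₃ / σ F₂ * (σ F₂ / σ F₁) = σ F₃ / σ F₁ := by
    field_simp [(hS.pos hσ₂.1).ne']
  have hba : σ F₂ / σ F₁ * (σ F₃ / σ F₂ + 1) = σ (F₂ ∪ F₃) / σ F₁ := by
    rw [hσ_union _ _ h₂₃.disjoint]
    field_simp [(hS.pos hσ₂.1).ne']
    ring
  have ha : σ F₃ / σ F₂ ∈ S := hS.div_mem hσ₃.1 hσ₂.1 hσ₂.2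
  have hb : σ F₂ / σ F₁ ∈ S := hS.div_mem hσ₂.1 hσ₁.1 hσ₁.2
  refine ⟨_, _, ha, hb, hab ▸ hS.div_mem hσ₃.1 hσ₁.1 hσ₁.2,
    hba ▸ hS.div_mem (hσS _ (hF₂.mono subset_union_left)).1 hσ₁.1 hσ₁.2,
    hS.pos ha, hσ_lt F₂ F₃ hF₂ h₂₃, hS.pos hb, hσ_lt F₁ F₂ hF₁ h₁₂, ?_, ?_, ?_⟩ <;>
    simp only [hd, hab, hba]
  exacts [e₂₃.symm, e₂₃.symm.trans e₁₃, e₂₃.symm.trans e₁₂₃]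
end

section
/- Let S be an HL semigroup. For every finite partition S = C₁ ∪ ⋯ ∪ C_r (r ∈ ℕ) and every ε > 0, there exist an index m ≤ r and elements x, y ∈ S such that all four elements x, y, x + y and y/x belong to C_m ∩ (0, ε). (Corollary 4.4: the pattern x, y, x+y, y/x is partition regular near zero.) -/
/-!
Take an additively idempotent ultrafilter `U` concentrated on small elements of `S`, and write
`U / c` for its image under `t ↦ t / c`. Finitely many cells cover `S`, so one cell `C` belongs
to `U / c` for `U`-almost every `c`. Fix such a `c`; idempotence of `U` lets us pick another such
`d` with `a := d / c ∈ C` and `a + w ∈ C` for `U / c`-almost all `w`. Since `U / c` is the image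
of `U / d` under `v ↦ a * v`, some `v` has `v`, `a * v` and `a + a * v` in `C`, and the pair
`a`, `a * v` has sum and quotient in `C` as well.
-/

open Filter Set Topology

attribute [local instance] Ultrafilter.add Ultrafilter.addSemigroup

theorem Ultrafilter.exists_add_idempotent_le {M : Type*} [AddSemigroup M] (l : Filter M)
    [l.NeBot] (hl : Tendsto (fun p : M × M => p.1 + p.2) (l ×ˢ l) l) :
    ∃ U : Ultrafilter M, U + U = U ∧ ↑U ≤ l := by
  have hclosed : IsClosed {U : Ultrafilter M | ↑U ≤ l} := by
    simp only [le_def, ofPred_forall]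
    exact isClosed_biInter fun s _ => ultrafilter_isClosed_basic s
  obtain ⟨U, hUl, hU⟩ := exists_idempotent_in_compact_add_subsemigroup
    Ultrafilter.continuous_add_left _ ⟨Ultrafilter.of l, Ultrafilter.of_le l⟩ hclosed.isCompact
    fun U hU V hV s hs => ((hl.eventually_mem hs).curry.filter_mono hU).mono fun _ h => hV h
  exact ⟨U, hU, hUl⟩

theorem tendsto_add_nhdsWithin_zero {M : Type*} [TopologicalSpace M] [AddZeroClass M]
    [ContinuousAdd M] {S : Set M} (hS : ∀ x ∈ S, ∀ y ∈ S, x + y ∈ S) :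
    Tendsto (fun p : M × M => p.1 + p.2) (𝓝[S] 0 ×ˢ 𝓝[S] 0) (𝓝[S] 0) := by
  refine tendsto_nhdsWithin_iff.2 ⟨?_, ?_⟩
  · simpa using ((tendsto_fst (g := 𝓝[S] 0)).mono_right nhdsWithin_le_nhds).add
      ((tendsto_snd (f := 𝓝[S] (0 : M))).mono_right nhdsWithin_le_nhds)
  · filter_upwards [prod_mem_prod self_mem_nhdsWithin self_mem_nhdsWithin] with p hp
    exact hS _ hp.1 _ hp.2

theorem exists_mem_mul_add_mul_of_add_idempotent {K ι : Type*} [Semifield K] [Finite ι]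
    (U : Ultrafilter K) (hU : U + U = U) (B : ι → Set K)
    (hB : ∀ᶠ c in U, c ≠ 0 ∧ ∀ᶠ t in U, ∃ i, t / c ∈ B i) :
    ∃ i, ∃ a ∈ B i, ∃ v ∈ B i, a * v ∈ B i ∧ a + a * v ∈ B i := by
  obtain ⟨i, hi⟩ : ∃ i, ∀ᶠ c in U, c ≠ 0 ∧ ∀ᶠ t in U, t / c ∈ B i := by
    rw [← Ultrafilter.eventually_exists_iff]
    filter_upwards [hB] with c ⟨hc, ht⟩
    obtain ⟨i, hi⟩ := Ultrafilter.eventually_exists_iff.1 ht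
    exact ⟨i, hc, hi⟩
  obtain ⟨c, -, hc⟩ := hi.exists
  have hc_add : ∀ᶠ s in U, ∀ᶠ t in U, s / c + t / c ∈ B i := by
    rw [← hU] at hc
    simpa only [add_div] using (Ultrafilter.eventually_add U U _).1 hc
  obtain ⟨d, ⟨hd0, hd⟩, hdc, hdc_add⟩ := (hi.and (hc.and hc_add)).exists
  obtain ⟨t, htd, htc, htdc⟩ := (hd.and (hc.and hdc_add)).exists
  have hmul : d / c * (t / d) = t / c := by field_simp
  exact ⟨i, d / c, hdc, t / d, htd, hmul ▸ htc, hmul ▸ htdc⟩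

/-- Corollary 4.4: the pattern `x, y, x+y, y/x` is partition regular near zero. -/
theorem sums_and_quotients_near_zero (S : Set ℝ) (hS : IsHL S)
    (r : ℕ) (C : Fin r → Set ℝ) (hcover : S = ⋃ i, C i) (ε : ℝ) (hε : 0 < ε) :
    ∃ (m : Fin r), ∃ x ∈ S, ∃ y ∈ S,
      x ∈ C m ∩ Set.Ioo 0 ε ∧ y ∈ C m ∩ Set.Ioo 0 ε ∧
      x + y ∈ C m ∩ Set.Ioo 0 ε ∧ y / x ∈ C m ∩ Set.Ioo 0 ε := by
  obtain ⟨hpos, hdense, hadd, -, hdiv⟩ := hS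
  have : (𝓝[S] (0 : ℝ)).NeBot := mem_closure_iff_nhdsWithin_neBot.1 <|
    closure_minimal hdense isClosed_closure (by simp)
  obtain ⟨U, hU, hUS⟩ :=
    Ultrafilter.exists_add_idempotent_le _ (tendsto_add_nhdsWithin_zero hadd)
  have small : ∀ δ > 0, ∀ᶠ t in U, t ∈ S ∧ 0 < t ∧ t < δ := fun δ hδ =>
    Eventually.mono (hUS (inter_mem self_mem_nhdsWithin (nhdsWithin_le_nhds (Iio_mem_nhds hδ))))
      fun t ht => ⟨ht.1, hpos t ht.1, ht.2⟩
  obtain ⟨m, a, ha, v, hv, hav, haav⟩ :=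
    exists_mem_mul_add_mul_of_add_idempotent U hU (fun m => C m ∩ Ioo 0 ε) <| by
      filter_upwards [small 1 one_pos] with c ⟨hcS, hc0, hc1⟩
      refine ⟨hc0.ne', ?_⟩
      filter_upwards [small (c * ε) (by positivity)] with t ⟨htS, ht0, htε⟩
      obtain ⟨m, hm⟩ := mem_iUnion.1 (hcover ▸ (hdiv c hcS hc1 t htS).1)
      exact ⟨m, hm, div_pos ht0 hc0, (div_lt_iff₀' hc0).2 htε⟩
  have hCS : C m ⊆ S := hcover ▸ subset_iUnion C m
  refine ⟨m, a, hCS ha.1, a * v, hCS hav.1, ha, hav, haav, ?_⟩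
  rwa [mul_div_cancel_left₀ v ha.2.1.ne']
end

section
/- Let S be an HL semigroup, fix s₀ ∈ S, and let u be an ultrafilter on S belonging to 0⁺(S) with u + u = u. Then for every C ∈ D(u ⊗ u) there exist sequences ⟨xₙ⟩ and ⟨yₙ⟩ of elements of S such that: (1) every finite nonempty sum ∑_{n∈F} xₙ belongs to C, and for all finite nonempty F, G ⊆ ℕ with max F < min G, the quotient (∑_{n∈G} xₙ)/(∑_{n∈F} xₙ) belongs to C; and (2) for every finite nonempty F ⊆ ℕ and every k ∈ ℕ with k ≤ min F, the element ∑_{l∈F} ∏_{n=k}^{l} yₙ belongs to C. (Theorem 4.3.) -/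
/-- `0⁺(S)`: ultrafilters converging to zero along `S`. -/
def zeroPlus (S : Set ℝ) : Set (Ultrafilter ℝ) :=
  {p | ∀ ε > (0:ℝ), {x | x ∈ S ∧ x < ε} ∈ p}

/-- Addition of ultrafilters: `A ∈ p + q` iff `{x | {y | x + y ∈ A} ∈ q} ∈ p`. -/
def uAdd (p q : Ultrafilter ℝ) : Ultrafilter ℝ :=
  p.bind fun x => q.map fun y => x + y

/-- Tensor product of ultrafilters: `A ∈ p ⊗ q` iff `{x | {y | (x,y) ∈ A} ∈ q} ∈ p`. -/
def tensor (p q : Ultrafilter ℝ) : Ultrafilter (ℝ × ℝ) :=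
  p.bind fun x => q.map fun y => (x, y)

/-- The map `D(x,y) = y/x` if `x < 1`, and `s₀` otherwise. -/
noncomputable def Dmap (s₀ : ℝ) : ℝ × ℝ → ℝ := fun z => if z.1 < 1 then z.2 / z.1 else s₀

/-!
Idempotence of `u` gives every `B ∈ u` a point `b ∈ B` with `-b + B ∈ u`. Start from
`B = {x ∈ S | x < 1, D(x, ·)⁻¹ C ∈ u}` with fibres `Φ x = D(x, ·)⁻¹ C`, repeatedly pick such a
pivot `bₙ`, and shrink the set and the fibres so that they stay `u`-large. This produces `b` with
all finite sums in `B` and `∑_G b ∈ Φ (∑_F b)`, i.e. `(∑_G b) / (∑_F b) ∈ C`, whenever `F < G`.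
Then `xₙ = bₙ₊₁ / b₀` and `yₙ = bₙ₊₁ / bₙ` work: `∑_F x` and `∑_{l ∈ F} ∏_{n=k}^{l} yₙ` telescope
to `(∑_{F+1} b) / b_k`, and `(∑_G x) / (∑_F x) = (∑_{G+1} b) / (∑_{F+1} b)`.
-/

attribute [local instance] Ultrafilter.add

theorem uAdd_eq_add (p q : Ultrafilter ℝ) : uAdd p q = p + q :=
  Ultrafilter.coe_injective <| Filter.ext fun _ => Iff.rfl

namespace Ultrafilter

variable {M : Type*} [AddCommMonoid M] {U : Ultrafilter M}

theorem exists_mem_and_eventually_add_mem (hU : U + U = U) {B : Set M} (hB : B ∈ U) :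
    ∃ b ∈ B, ∀ᶠ y in U, b + y ∈ B := by
  have hB' : ∀ᶠ b in U, ∀ᶠ y in U, b + y ∈ B := by
    rw [← eventually_add, hU]
    exact hB
  exact Filter.nonempty_of_mem (Filter.inter_mem hB hB')

/-- Junk when no such point exists. -/
noncomputable def addPivot (U : Ultrafilter M) (B : Set M) : M :=
  Classical.epsilon fun b => b ∈ B ∧ ∀ᶠ y in U, b + y ∈ B

theorem addPivot_spec (hU : U + U = U) {B : Set M} (hB : B ∈ U) :
    addPivot U B ∈ B ∧ ∀ᶠ y in U, addPivot U B + y ∈ B :=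
  Classical.epsilon_spec <| by simpa using exists_mem_and_eventually_add_mem hU hB

def IsFiberwiseLarge (U : Ultrafilter M) (s : Set M × (M → Set M)) : Prop :=
  s.1 ∈ U ∧ ∀ x ∈ s.1, s.2 x ∈ U

/-- Once the pivot `b` of `s.1` is chosen, all later sums must stay in `s.1` after adding `b`
and lie in `s.2 b`, and the fibre over `x` must also serve as the fibre over `b + x`. -/
noncomputable def shrink (U : Ultrafilter M) (s : Set M × (M → Set M)) :
    Set M × (M → Set M) :=
  (s.1 ∩ {y | addPivot U s.1 + y ∈ s.1} ∩ s.2 (addPivot U s.1),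
    fun x => s.2 x ∩ s.2 (addPivot U s.1 + x))

theorem IsFiberwiseLarge.shrink (hU : U + U = U) {s : Set M × (M → Set M)}
    (hs : IsFiberwiseLarge U s) : IsFiberwiseLarge U (shrink U s) := by
  obtain ⟨hb, hbU⟩ := addPivot_spec hU hs.1
  refine ⟨Filter.inter_mem (Filter.inter_mem hs.1 hbU) (hs.2 _ hb), ?_⟩
  rintro x ⟨⟨hx, hbx⟩, -⟩
  exact Filter.inter_mem (hs.2 x hx) (hs.2 _ hbx)

noncomputable def shrinkSeq (U : Ultrafilter M) (s : Set M × (M → Set M)) (n : ℕ) :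
    Set M × (M → Set M) :=
  (shrink U)^[n] s

noncomputable def pivotSeq (U : Ultrafilter M) (s : Set M × (M → Set M)) (n : ℕ) : M :=
  addPivot U (shrinkSeq U s n).1

section shrinkSeq

variable {s : Set M × (M → Set M)}

theorem shrinkSeq_succ (n : ℕ) : shrinkSeq U s (n + 1) = shrink U (shrinkSeq U s n) :=
  Function.iterate_succ_apply' _ _ _

theorem IsFiberwiseLarge.shrinkSeq (hU : U + U = U) (hs : IsFiberwiseLarge U s) (n : ℕ) :
    IsFiberwiseLarge U (shrinkSeq U s n) := by
  induction n with
  | zero => exact hs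
  | succ n ih => rw [shrinkSeq_succ]; exact ih.shrink hU

theorem antitone_shrinkSeq_fst : Antitone fun n => (shrinkSeq U s n).1 :=
  antitone_nat_of_succ_le fun n => by
    rw [shrinkSeq_succ]
    exact Set.inter_subset_left.trans Set.inter_subset_left

theorem antitone_shrinkSeq_snd (x : M) : Antitone fun n => (shrinkSeq U s n).2 x :=
  antitone_nat_of_succ_le fun n => by
    rw [shrinkSeq_succ]
    exact Set.inter_subset_left

theorem pivotSeq_mem (hU : U + U = U) (hs : IsFiberwiseLarge U s) (n : ℕ) :
    pivotSeq U s n ∈ (shrinkSeq U s n).1 :=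
  (addPivot_spec hU (hs.shrinkSeq hU n).1).1

theorem pivotSeq_add_mem {n : ℕ} {y : M} (hy : y ∈ (shrinkSeq U s (n + 1)).1) :
    pivotSeq U s n + y ∈ (shrinkSeq U s n).1 := by
  rw [shrinkSeq_succ] at hy
  exact hy.1.2

theorem shrinkSeq_succ_fst_subset (n : ℕ) :
    (shrinkSeq U s (n + 1)).1 ⊆ (shrinkSeq U s n).2 (pivotSeq U s n) := by
  rw [shrinkSeq_succ]
  exact Set.inter_subset_right

theorem shrinkSeq_succ_snd_subset (n : ℕ) (x : M) :
    (shrinkSeq U s (n + 1)).2 x ⊆ (shrinkSeq U s n).2 (pivotSeq U s n + x) := by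
  rw [shrinkSeq_succ]
  exact Set.inter_subset_right

theorem sum_pivotSeq_mem_fst (hU : U + U = U) (hs : IsFiberwiseLarge U s) {F : Finset ℕ}
    (hF : F.Nonempty) {n : ℕ} (hn : ∀ i ∈ F, n ≤ i) :
    ∑ i ∈ F, pivotSeq U s i ∈ (shrinkSeq U s n).1 := by
  induction F using Finset.induction_on_min generalizing n with
  | empty => exact absurd hF Finset.not_nonempty_empty
  | insert a F haF ih =>
    have hna : n ≤ a := hn a (Finset.mem_insert_self a F)
    refine antitone_shrinkSeq_fst hna ?_
    rw [Finset.sum_insert fun h => (haF a h).false]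
    rcases F.eq_empty_or_nonempty with rfl | hF'
    · simpa using pivotSeq_mem hU hs a
    · exact pivotSeq_add_mem (ih hF' fun i hi => haF i hi)

theorem sum_pivotSeq_mem_snd (hU : U + U = U) (hs : IsFiberwiseLarge U s) {F G : Finset ℕ}
    (hF : F.Nonempty) (hG : G.Nonempty) (hFG : ∀ i ∈ F, ∀ j ∈ G, i < j) {n : ℕ}
    (hn : ∀ i ∈ F, n ≤ i) :
    ∑ j ∈ G, pivotSeq U s j ∈ (shrinkSeq U s n).2 (∑ i ∈ F, pivotSeq U s i) := by
  induction F using Finset.induction_on_min generalizing n with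
  | empty => exact absurd hF Finset.not_nonempty_empty
  | insert a F haF ih =>
    have hna : n ≤ a := hn a (Finset.mem_insert_self a F)
    refine antitone_shrinkSeq_snd _ hna ?_
    rw [Finset.sum_insert fun h => (haF a h).false]
    rcases F.eq_empty_or_nonempty with rfl | hF'
    · have hG' := sum_pivotSeq_mem_fst hU hs hG fun j hj => hFG a (by simp) j hj
      simpa using shrinkSeq_succ_fst_subset a hG'
    · exact shrinkSeq_succ_snd_subset a _ <|
        ih hF' (fun i hi j hj => hFG i (Finset.mem_insert_of_mem hi) j hj) fun i hi => haF i hi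

end shrinkSeq

theorem exists_seq_sum_mem_of_add_idempotent (hU : U + U = U) {B : Set M} (hB : B ∈ U)
    {Φ : M → Set M} (hΦ : ∀ x ∈ B, Φ x ∈ U) :
    ∃ b : ℕ → M, (∀ F : Finset ℕ, F.Nonempty → ∑ i ∈ F, b i ∈ B) ∧
      ∀ F G : Finset ℕ, F.Nonempty → G.Nonempty → (∀ i ∈ F, ∀ j ∈ G, i < j) →
        ∑ j ∈ G, b j ∈ Φ (∑ i ∈ F, b i) :=
  ⟨pivotSeq U (B, Φ),
    fun _ hF => sum_pivotSeq_mem_fst (s := (B, Φ)) hU ⟨hB, hΦ⟩ hF fun _ _ => Nat.zero_le _,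
    fun _ _ hF hG hFG =>
      sum_pivotSeq_mem_snd (s := (B, Φ)) hU ⟨hB, hΦ⟩ hF hG hFG fun _ _ => Nat.zero_le _⟩

end Ultrafilter

theorem Finset.prod_Icc_succ_div {K : Type*} [CommGroupWithZero K] {f : ℕ → K}
    (hf : ∀ n, f n ≠ 0) {k l : ℕ} (hkl : k ≤ l) :
    ∏ n ∈ Finset.Icc k l, f (n + 1) / f n = f (l + 1) / f k := by
  simpa using congrArg Units.val (Finset.prod_Icc_div hkl fun n => Units.mk0 (f n) (hf n))

theorem exists_seq_div_sum_mem {S : Set ℝ} {u : Ultrafilter ℝ} (hu : u ∈ zeroPlus S)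
    (hidem : uAdd u u = u) {s₀ : ℝ} {C : Set ℝ} (hC : C ∈ (tensor u u).map (Dmap s₀)) :
    ∃ b : ℕ → ℝ, (∀ n, b n ∈ S ∧ b n < 1) ∧
      ∀ F G : Finset ℕ, F.Nonempty → G.Nonempty → (∀ i ∈ F, ∀ j ∈ G, i < j) →
        (∑ j ∈ G, b j) / (∑ i ∈ F, b i) ∈ C := by
  have hB : {x | x ∈ S ∧ x < 1} ∩ {x | ∀ᶠ y in u, Dmap s₀ (x, y) ∈ C} ∈ u :=
    Filter.inter_mem (hu 1 one_pos) hC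
  obtain ⟨b, hbB, hbC⟩ := Ultrafilter.exists_seq_sum_mem_of_add_idempotent
    ((uAdd_eq_add u u).symm.trans hidem) hB (Φ := fun x => {y | Dmap s₀ (x, y) ∈ C})
    fun x hx => hx.2
  refine ⟨b, fun n => by simpa using (hbB {n} (Finset.singleton_nonempty n)).1,
    fun F G hF hG hFG => ?_⟩
  simpa only [Set.mem_ofPred_eq, Dmap, if_pos (hbB F hF).1.2] using hbC F G hF hG hFG

theorem sums_quotients_products_near_zero_general (S : Set ℝ) (hS : IsHL S)
    (s₀ : ℝ) (u : Ultrafilter ℝ)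
    (hu : u ∈ zeroPlus S) (hidem : uAdd u u = u)
    (C : Set ℝ) (hC : C ∈ (tensor u u).map (Dmap s₀)) :
    ∃ (x y : ℕ → ℝ), (∀ n, x n ∈ S) ∧ (∀ n, y n ∈ S) ∧
      (∀ F : Finset ℕ, F.Nonempty → (∑ n ∈ F, x n) ∈ C) ∧
      (∀ F G : Finset ℕ, F.Nonempty → G.Nonempty → (∀ a ∈ F, ∀ b ∈ G, a < b) →
        (∑ n ∈ G, x n) / (∑ n ∈ F, x n) ∈ C) ∧
      (∀ F : Finset ℕ, F.Nonempty → ∀ k : ℕ, (∀ l ∈ F, k ≤ l) →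
        (∑ l ∈ F, ∏ n ∈ Finset.Icc k l, y n) ∈ C) := by
  obtain ⟨b, hb, hbC⟩ := exists_seq_div_sum_mem hu hidem hC
  have hb0 : ∀ n, b n ≠ 0 := fun n => (hS.1 _ (hb n).1).ne'
  have hbS : ∀ m n, b n / b m ∈ S := fun m n => (hS.2.2.2.2 _ (hb m).1 (hb m).2 _ (hb n).1).1
  have hshift : ∀ G : Finset ℕ, ∑ j ∈ G.map (addRightEmbedding 1), b j = ∑ j ∈ G, b (j + 1) :=
    fun G => by simp
  have hsucc : ∀ G : Finset ℕ, G.Nonempty → ∀ k, (∀ j ∈ G, k ≤ j) →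
      (∑ j ∈ G, b (j + 1)) / b k ∈ C := fun G hG k hk => by
    simpa [hshift] using hbC {k} (G.map (addRightEmbedding 1)) (Finset.singleton_nonempty k)
      hG.map (by simpa [Nat.lt_succ_iff] using hk)
  refine ⟨fun n => b (n + 1) / b 0, fun n => b (n + 1) / b n, fun n => hbS 0 (n + 1),
    fun n => hbS n (n + 1), fun F hF => ?_, fun F G hF hG hFG => ?_, fun F hF k hk => ?_⟩
  · rw [← Finset.sum_div]
    exact hsucc F hF 0 fun _ _ => Nat.zero_le _
  · rw [← Finset.sum_div, ← Finset.sum_div, div_div_div_cancel_right₀ (hb0 0), ← hshift,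
      ← hshift]
    exact hbC _ _ hF.map hG.map (by simpa using hFG)
  · rw [Finset.sum_congr rfl fun l hl => Finset.prod_Icc_succ_div hb0 (hk l hl),
      ← Finset.sum_div]
    exact hsucc F hF k hk

/-- Theorem 4.3. -/
theorem sums_quotients_products_near_zero (S : Set ℝ) (hS : IsHL S)
    (s₀ : ℝ) (hs₀ : s₀ ∈ S) (u : Ultrafilter ℝ)
    (hu : u ∈ zeroPlus S) (hidem : uAdd u u = u)
    (C : Set ℝ) (hC : C ∈ (tensor u u).map (Dmap s₀)) :
    ∃ (x y : ℕ → ℝ), (∀ n, x n ∈ S) ∧ (∀ n, y n ∈ S) ∧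
      (∀ F : Finset ℕ, F.Nonempty → (∑ n ∈ F, x n) ∈ C) ∧
      (∀ F G : Finset ℕ, F.Nonempty → G.Nonempty → (∀ a ∈ F, ∀ b ∈ G, a < b) →
        (∑ n ∈ G, x n) / (∑ n ∈ F, x n) ∈ C) ∧
      (∀ F : Finset ℕ, F.Nonempty → ∀ k : ℕ, (∀ l ∈ F, k ≤ l) →
        (∑ l ∈ F, ∏ n ∈ Finset.Icc k l, y n) ∈ C) :=
  sums_quotients_products_near_zero_general S hS s₀ u hu hidem C hC
end

section
/- Let S be an HL semigroup, fix s₀ ∈ S, and let u be an ultrafilter on S belonging to 0⁺(S). Then the image ultrafilter D(u ⊗ u) also belongs to 0⁺(S). (Lemma 4.2.) -/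
theorem mem_tensor_iff {p q : Ultrafilter ℝ} {A : Set (ℝ × ℝ)} :
    A ∈ tensor p q ↔ {x | {y | (x, y) ∈ A} ∈ q} ∈ p :=
  Iff.rfl

theorem Dmap_of_lt_one (s₀ : ℝ) {x : ℝ} (hx : x < 1) (y : ℝ) : Dmap s₀ (x, y) = y / x :=
  if_pos hx

theorem IsHL.pos_s4 {S : Set ℝ} (hS : IsHL S) {x : ℝ} (hx : x ∈ S) : 0 < x :=
  hS.1 x hx

theorem IsHL.div_mem_s4 {S : Set ℝ} (hS : IsHL S) {x y : ℝ} (hx : x ∈ S) (hx1 : x < 1)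
    (hy : y ∈ S) : y / x ∈ S :=
  (hS.2.2.2.2 x hx hx1 y hy).1

theorem Dmap_tensor_mem_zeroPlus_general (S : Set ℝ) (hS : IsHL S)
    (s₀ : ℝ) (u : Ultrafilter ℝ) (hu : u ∈ zeroPlus S) :
    (tensor u u).map (Dmap s₀) ∈ zeroPlus S := by
  intro ε hε
  rw [Ultrafilter.mem_map, mem_tensor_iff]
  filter_upwards [hu 1 one_pos] with x ⟨hxS, hx1⟩
  have hx0 : 0 < x := hS.pos_s4 hxS
  filter_upwards [hu (ε * x) (mul_pos hε hx0)] with y ⟨hyS, hyε⟩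
  rw [Set.mem_preimage, Dmap_of_lt_one s₀ hx1]
  exact ⟨hS.div_mem_s4 hxS hx1 hyS, (div_lt_iff₀ hx0).mpr hyε⟩

/-- Lemma 4.2: the image of `u ⊗ u` under `D` belongs to `0⁺(S)`. -/
theorem Dmap_tensor_mem_zeroPlus (S : Set ℝ) (hS : IsHL S)
    (s₀ : ℝ) (hs₀ : s₀ ∈ S) (u : Ultrafilter ℝ) (hu : u ∈ zeroPlus S) :
    (tensor u u).map (Dmap s₀) ∈ zeroPlus S :=
  Dmap_tensor_mem_zeroPlus_general S hS s₀ u hu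
end

section
/- Let S be an HL semigroup and let A ⊆ S be an IP-set near zero. Then there exists y ∈ A such that the set (−y + A) ∩ A = {x ∈ S : x + y ∈ A} ∩ A is also an IP-set near zero. (Lemma 3.2.) -/
/-- `A ⊆ S` is an IP-set near zero: there is a sequence in `S` whose series is
summable and all of whose finite nonempty sums lie in `A`. -/
def IPNearZero (S A : Set ℝ) : Prop :=
  ∃ x : ℕ → ℝ, (∀ n, x n ∈ S) ∧ Summable x ∧
    ∀ F : Finset ℕ, F.Nonempty → (∑ n ∈ F, x n) ∈ A

theorem Finset.sum_add_one_eq_sum_map {M : Type*} [AddCommMonoid M] (x : ℕ → M) (F : Finset ℕ) :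
    ∑ n ∈ F, x (n + 1) = ∑ n ∈ F.map (addRightEmbedding 1), x n :=
  (Finset.sum_map F (addRightEmbedding 1) x).symm

theorem Finset.sum_add_one_add_eq_sum_insert_zero {M : Type*} [AddCommMonoid M] (x : ℕ → M)
    (F : Finset ℕ) :
    ∑ n ∈ F, x (n + 1) + x 0 = ∑ n ∈ insert 0 (F.map (addRightEmbedding 1)), x n := by
  have hzero : 0 ∉ F.map (addRightEmbedding 1) := by simp
  rw [Finset.sum_insert hzero, Finset.sum_add_one_eq_sum_map, add_comm]

theorem exists_translate_IPNearZero_general (S : Set ℝ)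
    (A : Set ℝ) (hA : A ⊆ S) (hIP : IPNearZero S A) :
    ∃ y ∈ A, IPNearZero S ({x | x ∈ S ∧ x + y ∈ A} ∩ A) := by
  obtain ⟨x, hxS, hx, hFS⟩ := hIP
  have tail_mem : ∀ F : Finset ℕ, F.Nonempty → ∑ n ∈ F, x (n + 1) ∈ A := fun F hF => by
    rw [Finset.sum_add_one_eq_sum_map]
    exact hFS _ hF.map
  refine ⟨x 0, by simpa using hFS {0} (Finset.singleton_nonempty 0), fun n => x (n + 1),
    fun n => hxS (n + 1), (summable_nat_add_iff 1).mpr hx, fun F hF => ?_⟩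
  refine ⟨⟨hA (tail_mem F hF), ?_⟩, tail_mem F hF⟩
  show ∑ n ∈ F, x (n + 1) + x 0 ∈ A
  rw [Finset.sum_add_one_add_eq_sum_insert_zero]
  exact hFS _ (Finset.insert_nonempty _ _)

/-- Lemma 3.2. -/
theorem exists_translate_IPNearZero (S : Set ℝ) (hS : IsHL S)
    (A : Set ℝ) (hA : A ⊆ S) (hIP : IPNearZero S A) :
    ∃ y ∈ A, IPNearZero S ({x | x ∈ S ∧ x + y ∈ A} ∩ A) :=
  exists_translate_IPNearZero_general S A hA hIP
end

section
/- Let S be an HL semigroup, let A ⊆ S be an IP-set near zero, and let y ∈ S ∩ (0,1). Then the set y⁻¹A = {x ∈ S : x·y ∈ A} is also an IP-set near zero. (Lemma 3.3.) -/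
theorem IPNearZero.mono {S A B : Set ℝ} (h : IPNearZero S A) (hAB : A ⊆ B) : IPNearZero S B := by
  obtain ⟨x, hxS, hsum, hA⟩ := h
  exact ⟨x, hxS, hsum, fun F hF => hAB (hA F hF)⟩

theorem IPNearZero.preimage_mul_right {S A : Set ℝ} {c : ℝ} (hc : c ≠ 0)
    (hS : ∀ x ∈ S, x / c ∈ S) (h : IPNearZero S A) : IPNearZero S {z | z * c ∈ A} := by
  obtain ⟨x, hxS, hsum, hA⟩ := h
  refine ⟨fun n => x n / c, fun n => hS _ (hxS n), hsum.div_const c, fun F hF => ?_⟩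
  change (∑ n ∈ F, x n / c) * c ∈ A
  rw [← Finset.sum_div, div_mul_cancel₀ _ hc]
  exact hA F hF

/-- Lemma 3.3. -/
theorem preimage_mul_IPNearZero (S : Set ℝ) (hS : IsHL S)
    (A : Set ℝ) (hA : A ⊆ S) (hIP : IPNearZero S A)
    (y : ℝ) (hy : y ∈ S) (hy1 : y < 1) :
    IPNearZero S {x | x ∈ S ∧ x * y ∈ A} := by
  obtain ⟨hpos, -, -, -, hdiv⟩ := hS
  have hy0 : y ≠ 0 := (hpos y hy).ne'
  have hdivS : ∀ x ∈ S, x / y ∈ S := fun x hx => (hdiv y hy hy1 x hx).1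
  refine (hIP.preimage_mul_right hy0 hdivS).mono fun z hz => ⟨?_, hz⟩
  simpa only [mul_div_cancel_right₀ z hy0] using hdivS _ (hA hz)
end

section
/- Let S be an HL semigroup, let r ∈ ℕ, let S = A₁ ∪ ⋯ ∪ A_r be a partition of S into r cells, and let A ⊆ S be an IP-set near zero. Then there exists i ∈ {1, …, r} such that A ∩ A_i is also an IP-set near zero. (Lemma 3.4.) -/
/-!
Write the IP-set as the set `FS a` of finite sums of a summable sequence `a` in `S`.
By Hindman's theorem one cell `B i` contains `FS b` for some `b` with `FS b ⊆ FS a ⊆ A`.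
The terms of `b` lie in `S`, so they are positive, and all partial sums of `b` are finite sums
of `a`, hence bounded by `∑' n, a n`; so `b` is summable.
-/

open Hindman

namespace Hindman

theorem FS.exists_finsetSum_eq {M : Type*} [AddCommMonoid M] {a : Stream' M} {m : M}
    (hm : m ∈ FS a) : ∃ s : Finset ℕ, s.Nonempty ∧ ∑ i ∈ s, a.get i = m := by
  induction hm with
  | head' a => exact ⟨{0}, Finset.singleton_nonempty 0, by simp [Stream'.head]⟩
  | tail' a m _ ih =>
    obtain ⟨s, hs, rfl⟩ := ih
    refine ⟨s.image (· + 1), hs.image _, ?_⟩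
    rw [Finset.sum_image (add_left_injective 1).injOn]
    rfl
  | cons' a m _ ih =>
    obtain ⟨s, -, rfl⟩ := ih
    refine ⟨insert 0 (s.image (· + 1)), Finset.insert_nonempty _ _, ?_⟩
    rw [Finset.sum_insert (by simp), Finset.sum_image (add_left_injective 1).injOn]
    rfl

theorem FS_subset_iff {M : Type*} [AddCommMonoid M] {a : Stream' M} {A : Set M} :
    FS a ⊆ A ↔ ∀ s : Finset ℕ, s.Nonempty → ∑ i ∈ s, a.get i ∈ A := by
  refine ⟨fun h s hs => h (FS.finsetSum a s hs), fun h m hm => ?_⟩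
  obtain ⟨s, hs, rfl⟩ := FS.exists_finsetSum_eq hm
  exact h s hs

theorem exists_FS_subset_inter_of_subset_iUnion {M ι : Type*} [AddSemigroup M] [Finite ι]
    {a : Stream' M} {B : ι → Set M} (hcov : FS a ⊆ ⋃ i, B i) :
    ∃ i, ∃ b : Stream' M, FS b ⊆ FS a ∩ B i := by
  have hcov' : FS a ⊆ ⋃₀ Set.range (fun i => FS a ∩ B i) := fun m hm => by
    obtain ⟨i, hi⟩ := Set.mem_iUnion.1 (hcov hm)
    exact ⟨_, ⟨i, rfl⟩, hm, hi⟩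
  obtain ⟨-, ⟨i, rfl⟩, hb⟩ := FS_partition_regular a _ (Set.finite_range _) hcov'
  exact ⟨i, hb⟩

theorem FS_bddAbove_of_summable {a : Stream' ℝ} (ha : ∀ n, 0 ≤ a.get n)
    (hsum : Summable a.get) : BddAbove (FS a) := by
  refine ⟨∑' n, a.get n, fun m hm => ?_⟩
  obtain ⟨s, -, rfl⟩ := FS.exists_finsetSum_eq hm
  exact hsum.sum_le_tsum s fun n _ => ha n

theorem summable_of_FS_bddAbove {a : Stream' ℝ} (ha : ∀ n, 0 ≤ a.get n)
    (hbdd : BddAbove (FS a)) : Summable a.get := by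
  obtain ⟨c, hc⟩ := hbdd
  refine summable_of_sum_range_le (c := c) ha fun n => ?_
  rcases Nat.eq_zero_or_pos n with rfl | hn
  · simpa using (ha 0).trans (hc (FS.singleton a 0))
  · exact hc (FS.finsetSum a _ (Finset.nonempty_range_iff.2 hn.ne'))

end Hindman

theorem ipNearZero_iff_exists_FS_subset {S A : Set ℝ} :
    IPNearZero S A ↔ ∃ a : Stream' ℝ, (∀ n, a.get n ∈ S) ∧ Summable a.get ∧ FS a ⊆ A := by
  simp only [IPNearZero, FS_subset_iff]
  rfl

/-- Lemma 3.4. -/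
theorem IPNearZero_partition (S : Set ℝ) (hS : IsHL S)
    (r : ℕ) (B : Fin r → Set ℝ) (hcover : S = ⋃ i, B i)
    (A : Set ℝ) (hA : A ⊆ S) (hIP : IPNearZero S A) :
    ∃ i : Fin r, IPNearZero S (A ∩ B i) := by
  obtain ⟨a, haS, hsum, haA⟩ := ipNearZero_iff_exists_FS_subset.1 hIP
  obtain ⟨i, b, hb⟩ := exists_FS_subset_inter_of_subset_iUnion (B := B)
    (hcover ▸ haA.trans hA)
  have hbS : ∀ n, b.get n ∈ S := fun n => hA (haA (hb (FS.singleton b n)).1)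
  have hba : FS b ⊆ FS a := hb.trans Set.inter_subset_left
  have hbsum : Summable b.get :=
    summable_of_FS_bddAbove (fun n => (hS.1 _ (hbS n)).le)
      ((FS_bddAbove_of_summable (fun n => (hS.1 _ (haS n)).le) hsum).mono hba)
  exact ⟨i, ipNearZero_iff_exists_FS_subset.2
    ⟨b, hbS, hbsum, Set.subset_inter (hba.trans haA) (hb.trans Set.inter_subset_right)⟩⟩
end

section
/- For every finite coloring of the positive natural numbers, there exist a, b ∈ ℕ with a, b ≥ 1 such that the four numbers a, b, a·b and b·(a+1) all receive the same color. (Theorem 3.5, Goswami.) -/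
/-!
Take an additively idempotent ultrafilter `q` on `ℕ` containing every set of positive multiples;
its images `q / n` under `· / n` are again such ultrafilters. If `p = q / m` and `b` satisfy
* `c b` and `c (b + y)`, for `p`-almost all `y`, have the colour of `p`, and
* `p / b` has the same colour as `p`,
then a `p`-generic multiple `x` of `b` gives `a = x / b` with `a`, `b`, `a * b = x` and
`b * (a + 1) = b + x` all of that colour. Such `m` and `b` are found by colouring `n` with the
colour of `q / n` and taking `m` and `m * b` in the `q`-large class of that colouring.
-/

open Filter

attribute [local instance] Ultrafilter.add Ultrafilter.addSemigroup

namespace Ultrafilter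

def IsDivisible (q : Ultrafilter ℕ) : Prop :=
  ∀ u : ℕ, 0 < u → ∀ᶠ n in q, 0 < n ∧ u ∣ n

theorem eventually_map_div {q : Ultrafilter ℕ} {k : ℕ} {p : ℕ → Prop} :
    (∀ᶠ n in q.map (· / k), p n) ↔ ∀ᶠ n in q, p (n / k) :=
  Iff.rfl

theorem map_div_map_div (q : Ultrafilter ℕ) (m n : ℕ) :
    (q.map (· / m)).map (· / n) = q.map (· / (m * n)) := by
  rw [map_map]
  congr 1
  funext x
  exact Nat.div_div_eq_div_mul x m n

namespace IsDivisible

variable {q q' : Ultrafilter ℕ}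

theorem add (hq : q.IsDivisible) (hq' : q'.IsDivisible) : (q + q').IsDivisible := fun u hu =>
  (eventually_add q q' _).2 <| (hq u hu).mono fun _ hx => (hq' u hu).mono fun y hy =>
    ⟨Nat.add_pos_left hx.1 y, dvd_add hx.2 hy.2⟩

theorem map_div (hq : q.IsDivisible) {k : ℕ} (hk : 0 < k) : (q.map (· / k)).IsDivisible := by
  intro u hu
  refine (hq (k * u) (Nat.mul_pos hk hu)).mono ?_
  rintro n ⟨hn, t, rfl⟩
  rw [mul_assoc] at hn ⊢
  change 0 < k * (u * t) / k ∧ u ∣ k * (u * t) / k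
  rw [Nat.mul_div_cancel_left _ hk]
  exact ⟨Nat.pos_of_mul_pos_left hn, dvd_mul_right u t⟩

theorem map_div_add (hq : q.IsDivisible) (hq' : q'.IsDivisible) {k : ℕ} (hk : 0 < k) :
    (q + q').map (· / k) = q.map (· / k) + q'.map (· / k) := by
  ext s
  change (∀ᶠ z in q + q', z / k ∈ s) ↔ ∀ᶠ x in q.map (· / k), ∀ᶠ y in q'.map (· / k), x + y ∈ s
  rw [eventually_add, eventually_map_div]
  refine eventually_congr <| (hq k hk).mono fun x hx => ?_
  rw [eventually_map_div]
  refine eventually_congr <| (hq' k hk).mono fun y hy => ?_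
  rw [Nat.add_div_of_dvd_right hx.2]

theorem map_div_add_self (hq : q.IsDivisible) (hqq : q + q = q) {k : ℕ} (hk : 0 < k) :
    q.map (· / k) + q.map (· / k) = q.map (· / k) := by
  rw [← hq.map_div_add hq hk, hqq]

end IsDivisible

theorem isDivisible_map_factorial : ((hyperfilter ℕ).map Nat.factorial).IsDivisible := by
  intro u hu
  have h : ∀ᶠ n in hyperfilter ℕ, u ≤ n := Nat.hyperfilter_le_atTop (eventually_ge_atTop u)
  exact h.mono fun n hn => ⟨Nat.factorial_pos n, Nat.dvd_factorial hu hn⟩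

theorem isClosed_setOf_isDivisible : IsClosed {q : Ultrafilter ℕ | q.IsDivisible} := by
  simp only [IsDivisible, Set.ofPred_forall]
  exact isClosed_iInter fun u => isClosed_iInter fun _ => ultrafilter_isClosed_basic _

theorem exists_isDivisible_add_self : ∃ q : Ultrafilter ℕ, q.IsDivisible ∧ q + q = q :=
  exists_idempotent_in_compact_add_subsemigroup continuous_add_left _
    ⟨_, isDivisible_map_factorial⟩ isClosed_setOf_isDivisible.isCompact
    fun _ hq _ hq' => IsDivisible.add hq hq'

section Color

variable {α κ : Type*} [Finite κ]

noncomputable def color (c : α → κ) (q : Ultrafilter α) : κ :=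
  (eq_pure_of_finite (q.map c)).choose

theorem eventually_color (c : α → κ) (q : Ultrafilter α) : ∀ᶠ x in q, c x = q.color c := by
  have h : ∀ᶠ k in q.map c, k = q.color c := by
    rw [(eq_pure_of_finite (q.map c)).choose_spec]
    exact eventually_pure.2 rfl
  exact h

theorem eventually_color_add [AddSemigroup α] (c : α → κ) {q : Ultrafilter α} (hqq : q + q = q) :
    ∀ᶠ b in q, c b = q.color c ∧ ∀ᶠ y in q, c (b + y) = q.color c := by
  have h : ∀ᶠ x in q + q, c x = q.color c := by rw [hqq]; exact eventually_color c q
  exact (eventually_color c q).and ((eventually_add q q _).1 h)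

theorem IsDivisible.exists_shift_color_eq (c : ℕ → κ) {q : Ultrafilter ℕ} (hq : q.IsDivisible)
    (hqq : q + q = q) :
    ∃ p : Ultrafilter ℕ, p.IsDivisible ∧ ∃ b > 0, c b = p.color c ∧
      (∀ᶠ y in p, c (b + y) = p.color c) ∧ (p.map (· / b)).color c = p.color c := by
  -- `m` and `x = m * b` lie in the same class of `d`, so `p = q / m` and `p / b = q / x` agree.
  let d : ℕ → κ := fun n => (q.map (· / n)).color c
  obtain ⟨m, hm, hdm⟩ := ((hq 1 one_pos).and (eventually_color d q)).exists
  have hpp := hq.map_div_add_self hqq hm.1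
  obtain ⟨x, ⟨hx, hmx⟩, ⟨hcb, hshift⟩, hdx⟩ :=
    ((hq m hm.1).and ((eventually_map_div.1 (eventually_color_add c hpp)).and
      (eventually_color d q))).exists
  refine ⟨q.map (· / m), hq.map_div hm.1, x / m,
    Nat.div_pos (Nat.le_of_dvd hx hmx) hm.1, hcb, hshift, ?_⟩
  rw [map_div_map_div, Nat.mul_div_cancel' hmx]
  exact hdx.trans hdm.symm

theorem IsDivisible.exists_color_eq (c : ℕ → κ) {p : Ultrafilter ℕ} (hp : p.IsDivisible)
    {b : ℕ} (hb : 0 < b) (hshift : ∀ᶠ y in p, c (b + y) = p.color c)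
    (hcolor : (p.map (· / b)).color c = p.color c) :
    ∃ a, 1 ≤ a ∧ c a = p.color c ∧ c (a * b) = p.color c ∧ c (b * (a + 1)) = p.color c := by
  obtain ⟨x, ⟨hx, hbx⟩, hcx, hcbx, hcxb⟩ := ((hp b hb).and ((eventually_color c p).and
    (hshift.and (eventually_map_div.1 (eventually_color c (p.map (· / b))))))).exists
  refine ⟨x / b, Nat.div_pos (Nat.le_of_dvd hx hbx) hb, hcxb.trans hcolor, ?_, ?_⟩
  · rwa [Nat.div_mul_cancel hbx]
  · rwa [mul_add, mul_one, Nat.mul_div_cancel' hbx, add_comm]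

end Color

end Ultrafilter

open Ultrafilter in
/-- Theorem 3.5 (Goswami): for any finite coloring of the positive natural numbers,
the set `{a, b, a·b, b·(a+1)}` is monochromatic for some `a, b ≥ 1`. -/
theorem goswami (κ : Type*) [Finite κ] (c : ℕ → κ) :
    ∃ a b : ℕ, 1 ≤ a ∧ 1 ≤ b ∧
      c a = c b ∧ c a = c (a * b) ∧ c a = c (b * (a + 1)) := by
  obtain ⟨q, hq, hqq⟩ := exists_isDivisible_add_self
  obtain ⟨p, hp, b, hb, hcb, hshift, hcolor⟩ := hq.exists_shift_color_eq c hqq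
  obtain ⟨a, ha, hca, hcab, hcba⟩ := hp.exists_color_eq c hb hshift hcolor
  exact ⟨a, b, ha, hb, hca.trans hcb.symm, hca.trans hcab.symm, hca.trans hcba.symm⟩
end
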